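/- arXiv:1904.13055 — 2 statements merged into one kernel-verified Lean document; each statement's English description precedes it below -/
import Mathlib

section
/- Let (X, μ, h) be a probability measure preserving system, let 𝓛 be a linear subspace of L²(X, μ) with a norm ‖·‖_𝓛, and suppose there exist δ, C > 0 such that for every φ ∈ L^∞(X, μ), every ψ ∈ 𝓛 and every n ∈ ℕ, |∫_X φ(h^n x) ψ(x) dμ(x) − ∫_X φ dμ · ∫_X ψ dμ| ≤ C ‖φ‖_{L^∞} ‖ψ‖_𝓛 n^{−δ}. Then for every k ∈ ℕ, every f_0 ∈ 𝓛 ∩ L^∞(X, μ) with ∫_X f_0 dμ = 0, every f_1, …, f_k ∈ L^∞(X, μ), and all natural numbers n_1 < n_2 < ⋯ < n_k, one has |∫_X f_0(x) f_1(h^{n_1}x) ⋯ f_k(h^{n_k}x) dμ(x)| ≤ C ‖f_1‖_{L^∞} ⋯ ‖f_k‖_{L^∞} ‖f_0‖_𝓛 · n_1^{−δ}. -/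
/-!
As `n₁` is the smallest time, `∏ i, fᵢ ∘ h^[nᵢ] = φ ∘ h^[n₁]` with `φ = ∏ i, fᵢ ∘ h^[nᵢ - n₁]`.
Since `h` preserves `μ`, `‖φ‖_∞ ≤ ∏ i, ‖fᵢ‖_∞`, and the decay of correlations for the pair
`(φ, f₀)` at time `n₁` is the claimed bound, because `f₀` has mean zero.
-/

open MeasureTheory Filter

theorem MeasureTheory.eLpNorm_top_prod_le {ι α 𝕜 : Type*} [MeasurableSpace α] [NormedCommRing 𝕜]
    [NormOneClass 𝕜] {μ : Measure α} {f : ι → α → 𝕜} {s : Finset ι}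
    (hf : ∀ i ∈ s, AEStronglyMeasurable (f i) μ) :
    eLpNorm (fun x => ∏ i ∈ s, f i x) ⊤ μ ≤ ∏ i ∈ s, eLpNorm (f i) ⊤ μ := by
  induction s using Finset.cons_induction with
  | empty =>
    simpa using eLpNorm_le_of_ae_bound (μ := μ) (p := ⊤) (f := fun _ : α => (1 : 𝕜)) (C := 1)
      (.of_forall fun _ => by simp)
  | cons i s hi ih =>
    rw [Finset.forall_mem_cons] at hf
    simp only [Finset.prod_cons]
    calc eLpNorm (fun x => f i x * ∏ j ∈ s, f j x) ⊤ μ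
        ≤ eLpNorm (f i) ⊤ μ * eLpNorm (fun x => ∏ j ∈ s, f j x) ⊤ μ :=
          eLpNorm_smul_le_eLpNorm_top_mul_eLpNorm ⊤
            (Finset.aestronglyMeasurable_fun_prod _ hf.2) (f i)
      _ ≤ eLpNorm (f i) ⊤ μ * ∏ j ∈ s, eLpNorm (f j) ⊤ μ := by gcongr; exact ih hf.2

namespace MeasureTheory.MeasurePreserving

variable {ι α 𝕜 : Type*} [MeasurableSpace α] [NormedCommRing 𝕜] {μ : Measure α}
  {h : α → α} {f : ι → α → 𝕜} {s : Finset ι}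

theorem memLp_top_prod_comp_iterate (hh : MeasurePreserving h μ μ)
    (hf : ∀ i ∈ s, MemLp (f i) ⊤ μ) (m : ι → ℕ) :
    MemLp (fun x => ∏ i ∈ s, f i (h^[m i] x)) ⊤ μ := by
  simpa using MemLp.prod' (p := fun _ => ⊤)
    fun i hi => (hf i hi).comp_measurePreserving (hh.iterate (m i))

theorem toReal_eLpNorm_top_prod_comp_iterate_le [NormOneClass 𝕜] (hh : MeasurePreserving h μ μ)
    (hf : ∀ i ∈ s, MemLp (f i) ⊤ μ) (m : ι → ℕ) :
    (eLpNorm (fun x => ∏ i ∈ s, f i (h^[m i] x)) ⊤ μ).toReal ≤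
      ∏ i ∈ s, (eLpNorm (f i) ⊤ μ).toReal := by
  have hcomp : ∀ i ∈ s, eLpNorm (fun x => f i (h^[m i] x)) ⊤ μ = eLpNorm (f i) ⊤ μ := fun i hi =>
    eLpNorm_comp_measurePreserving (hf i hi).1 (hh.iterate (m i))
  have hbound := eLpNorm_top_prod_le (μ := μ) (f := fun i x => f i (h^[m i] x)) (s := s)
    fun i hi => ((hf i hi).comp_measurePreserving (hh.iterate (m i))).1
  rw [Finset.prod_congr rfl hcomp] at hbound
  rw [← ENNReal.toReal_prod]
  exact ENNReal.toReal_mono (ENNReal.prod_ne_top fun i hi => (hf i hi).eLpNorm_ne_top) hbound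

end MeasureTheory.MeasurePreserving

theorem Finset.prod_iterate_eq_prod_iterate_sub {ι α R : Type*} [CommMonoid R] (s : Finset ι)
    (f : ι → α → R) (h : α → α) {n : ι → ℕ} {m : ℕ} (hm : ∀ i ∈ s, m ≤ n i) (x : α) :
    ∏ i ∈ s, f i (h^[n i] x) = ∏ i ∈ s, f i (h^[n i - m] (h^[m] x)) :=
  Finset.prod_congr rfl fun i hi => by
    rw [← Function.iterate_add_apply, Nat.sub_add_cancel (hm i hi)]

theorem effective_decay_gives_multiple_bound_general
    {X : Type*} [MeasurableSpace X] (μ : Measure X)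
    (h : X → X) (hpres : MeasurePreserving h μ μ)
    (𝓛 : Submodule ℝ (X → ℝ))
    (nrm : (X → ℝ) → ℝ)
    (hnrm_nonneg : ∀ ψ ∈ 𝓛, 0 ≤ nrm ψ)
    (δ C : ℝ) (hC : 0 < C)
    (hcorr : ∀ φ : X → ℝ, Measurable φ → MemLp φ ⊤ μ → ∀ ψ ∈ 𝓛, ∀ n : ℕ, 1 ≤ n →
      |(∫ x, φ (h^[n] x) * ψ x ∂μ) - (∫ x, φ x ∂μ) * ∫ x, ψ x ∂μ| ≤
        C * (eLpNorm φ ⊤ μ).toReal * nrm ψ * (n : ℝ) ^ (-δ)) :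
    ∀ (k : ℕ) (hk : 0 < k),
      ∀ f₀ : X → ℝ, f₀ ∈ 𝓛 → MemLp f₀ ⊤ μ → (∫ x, f₀ x ∂μ) = 0 →
      ∀ f : Fin k → X → ℝ, (∀ i, Measurable (f i) ∧ MemLp (f i) ⊤ μ) →
      ∀ n : Fin k → ℕ, (∀ i, 1 ≤ n i) → StrictMono n →
        |∫ x, f₀ x * ∏ i, f i (h^[n i] x) ∂μ| ≤
          C * (∏ i, (eLpNorm (f i) ⊤ μ).toReal) * nrm f₀ *
            ((n ⟨0, hk⟩ : ℝ) ^ (-δ)) := by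
  intro k hk f₀ hf₀ _ hf₀_mean f hf n hn hmono
  set n₀ := n ⟨0, hk⟩
  have hn₀_le : ∀ i ∈ Finset.univ, n₀ ≤ n i := fun i _ =>
    hmono.monotone (show (⟨0, hk⟩ : Fin k) ≤ i from Nat.zero_le _)
  set φ : X → ℝ := fun y => ∏ i, f i (h^[n i - n₀] y)
  have hφ_meas : Measurable φ :=
    Finset.measurable_fun_prod _ fun i _ => (hf i).1.comp (hpres.measurable.iterate _)
  have hf_top : ∀ i ∈ Finset.univ, MemLp (f i) ⊤ μ := fun i _ => (hf i).2
  have hcorr₀ := hcorr φ hφ_meas (hpres.memLp_top_prod_comp_iterate hf_top _) f₀ hf₀ n₀ (hn _)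
  rw [hf₀_mean, mul_zero, sub_zero] at hcorr₀
  calc |∫ x, f₀ x * ∏ i, f i (h^[n i] x) ∂μ|
      = |∫ x, φ (h^[n₀] x) * f₀ x ∂μ| := by
        simp_rw [Finset.prod_iterate_eq_prod_iterate_sub _ _ h hn₀_le, mul_comm (f₀ _)]
        rfl
    _ ≤ C * (eLpNorm φ ⊤ μ).toReal * nrm f₀ * (n₀ : ℝ) ^ (-δ) := hcorr₀
    _ ≤ C * (∏ i, (eLpNorm (f i) ⊤ μ).toReal) * nrm f₀ * (n₀ : ℝ) ^ (-δ) := by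
        have hnrm₀ := hnrm_nonneg f₀ hf₀
        gcongr
        exact hpres.toReal_eLpNorm_top_prod_comp_iterate_le hf_top _

theorem effective_decay_gives_multiple_bound
    {X : Type*} [MeasurableSpace X] (μ : Measure X) [IsProbabilityMeasure μ]
    (h : X → X) (hmeas : Measurable h) (hpres : MeasurePreserving h μ μ)
    (𝓛 : Submodule ℝ (X → ℝ))
    (h𝓛meas : ∀ f ∈ 𝓛, Measurable f)
    (h𝓛L2 : ∀ f ∈ 𝓛, MemLp f 2 μ)
    (nrm : (X → ℝ) → ℝ)
    (hnrm_nonneg : ∀ ψ ∈ 𝓛, 0 ≤ nrm ψ)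
    (hnrm_definite : ∀ ψ ∈ 𝓛, nrm ψ = 0 → ψ = 0)
    (hnrm_smul : ∀ (a : ℝ), ∀ ψ ∈ 𝓛, nrm (a • ψ) = |a| * nrm ψ)
    (hnrm_add : ∀ ψ₁ ∈ 𝓛, ∀ ψ₂ ∈ 𝓛, nrm (ψ₁ + ψ₂) ≤ nrm ψ₁ + nrm ψ₂)
    (δ C : ℝ) (hδ : 0 < δ) (hC : 0 < C)
    (hcorr : ∀ φ : X → ℝ, Measurable φ → MemLp φ ⊤ μ → ∀ ψ ∈ 𝓛, ∀ n : ℕ, 1 ≤ n →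
      |(∫ x, φ (h^[n] x) * ψ x ∂μ) - (∫ x, φ x ∂μ) * ∫ x, ψ x ∂μ| ≤
        C * (eLpNorm φ ⊤ μ).toReal * nrm ψ * (n : ℝ) ^ (-δ)) :
    ∀ (k : ℕ) (hk : 0 < k),
      ∀ f₀ : X → ℝ, f₀ ∈ 𝓛 → MemLp f₀ ⊤ μ → (∫ x, f₀ x ∂μ) = 0 →
      ∀ f : Fin k → X → ℝ, (∀ i, Measurable (f i) ∧ MemLp (f i) ⊤ μ) →
      ∀ n : Fin k → ℕ, (∀ i, 1 ≤ n i) → StrictMono n →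
        |∫ x, f₀ x * ∏ i, f i (h^[n i] x) ∂μ| ≤
          C * (∏ i, (eLpNorm (f i) ⊤ μ).toReal) * nrm f₀ *
            ((n ⟨0, hk⟩ : ℝ) ^ (-δ)) :=
  effective_decay_gives_multiple_bound_general μ h hpres 𝓛 nrm hnrm_nonneg δ C hC hcorr
end

section
/- Let X, Y be measurable spaces, ℓ a positive integer, and for 1 ≤ i ≤ ℓ and n ∈ ℕ let ξ_i : Y → X, h_{i,n} : X → X and f_i : X → ℝ be measurable maps; set F_n(y) = Π_{i=1}^ℓ f_i(h_{i,n} ξ_i(y)) and let ν be a probability measure on Y such that every F_n is square integrable. Assume there exist M ≥ 1, 0 < δ < 1, functions b_{i,j} : ℕ × ℕ → [1, ∞] and c_{i,j} : ℕ → [1, ∞] (convention ∞^{−δ} = 0) such that: |∫_Y F_m F_n dν| ≤ M Σ_{i,j=1}^ℓ (b_{i,j}(m,n)^{−δ} + c_{i,j}(m)^{−δ} + c_{i,j}(n)^{−δ}) for all m, n ∈ ℕ; |{k ∈ ℕ : c_{i,j}(k) ≤ n}| ≤ M n for all i, j, n; and |{k ∈ ℕ : b_{i,j}(m,k) ≤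 n}| ≤ M n for all i, j, m, n. Then for all nonnegative integers m < n, ∫_Y (Σ_{m < k ≤ n} F_k(y))² dν(y) ≤ 2^{3+δ} M^{1+δ} (1 − δ)^{−1} ℓ² (n − m)^{2−δ}. -/
/-!
Expanding the square gives `∑_{k,k' ∈ (m,n]} ∫ F_k F_k'`, and each correlation is bounded by the
hypothesis, leaving sums such as `∑_{k ∈ (m,n]} c(k)^{-δ}`. If the indices are listed by increasing
value of `c`, the counting hypothesis gives `r ≤ M ⌈c⌉ ≤ 2 M c` for the `r`-th one, so the sum is
at most `(2M)^δ ∑_{r ≤ N} r^{-δ} ≤ (2M)^δ N^{1-δ} / (1 - δ)` with `N = n - m`; the last step is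
Bernoulli's inequality in the form `(1 - δ) r^{-δ} ≤ r^{1-δ} - (r - 1)^{1-δ}`.
-/

open MeasureTheory Finset
open scoped ENNReal

lemma one_sub_mul_rpow_neg_le_rpow_sub_rpow {δ x : ℝ} (hδ0 : 0 ≤ δ) (hδ1 : δ ≤ 1) (hx : 1 ≤ x) :
    (1 - δ) * x ^ (-δ) ≤ x ^ (1 - δ) - (x - 1) ^ (1 - δ) := by
  have hx0 : 0 < x := by linarith
  have hbern : (1 + -x⁻¹) ^ (1 - δ) ≤ 1 + (1 - δ) * -x⁻¹ :=
    rpow_one_add_le_one_add_mul_self (by simpa using inv_le_one_of_one_le₀ hx)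
      (by linarith) (by linarith)
  have hsplit : (x - 1) ^ (1 - δ) = x ^ (1 - δ) * (1 + -x⁻¹) ^ (1 - δ) := by
    rw [← Real.mul_rpow hx0.le (by simpa using inv_le_one_of_one_le₀ hx)]
    congr 1
    field_simp
    ring
  have hxδ : x ^ (1 - δ) * x⁻¹ = x ^ (-δ) := by
    rw [← Real.rpow_neg_one, ← Real.rpow_add hx0]
    ring_nf
  calc (1 - δ) * x ^ (-δ) = x ^ (1 - δ) - x ^ (1 - δ) * (1 + (1 - δ) * -x⁻¹) := by
        rw [← hxδ]; ring
    _ ≤ x ^ (1 - δ) - (x - 1) ^ (1 - δ) := by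
        rw [hsplit]
        gcongr

lemma toReal_rpow_neg_le_of_forall_le_natCast {M δ : ℝ} (hM : 0 < M) (hδ : 0 < δ)
    {x : ℝ≥0∞} (hx : 1 ≤ x) {r : ℕ} (hr : 0 < r)
    (hcount : ∀ n : ℕ, 1 ≤ n → x ≤ n → (r : ℝ) ≤ M * n) :
    (x ^ (-δ)).toReal ≤ (2 * M) ^ δ * (r : ℝ) ^ (-δ) := by
  rcases eq_or_ne x ∞ with rfl | hxtop
  · simp [ENNReal.top_rpow_of_neg (neg_neg_of_pos hδ)]
    positivity
  lift x to NNReal using hxtop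
  have hx1 : (1 : ℝ) ≤ x := by exact_mod_cast hx
  have hceil : 1 ≤ ⌈(x : ℝ)⌉₊ := Nat.one_le_ceil_iff.mpr (by linarith)
  have hrx : (r : ℝ) ≤ 2 * M * x := by
    have := hcount _ hceil (by exact_mod_cast (Nat.le_ceil (x : ℝ)))
    nlinarith [Nat.ceil_lt_add_one (by linarith : (0 : ℝ) ≤ x)]
  have hr0 : (0 : ℝ) < r := by exact_mod_cast hr
  calc ((x : ℝ≥0∞) ^ (-δ)).toReal = (x : ℝ) ^ (-δ) := by rw [← ENNReal.toReal_rpow]; rfl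
    _ ≤ ((r : ℝ) / (2 * M)) ^ (-δ) :=
        Real.rpow_le_rpow_of_nonpos (by positivity) (by rwa [div_le_iff₀' (by positivity)])
          (by linarith)
    _ = (2 * M) ^ δ * (r : ℝ) ^ (-δ) := by
        rw [Real.div_rpow hr0.le (by positivity), Real.rpow_neg (by positivity : (0 : ℝ) ≤ 2 * M)]
        field_simp

lemma sum_toReal_rpow_neg_le {ι : Type*} {M δ : ℝ} (hM : 0 < M) (hδ0 : 0 < δ) (hδ1 : δ < 1)
    {a : ι → ℝ≥0∞} {s : Finset ι} (ha : ∀ i ∈ s, 1 ≤ a i)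
    (hcount : ∀ t ⊆ s, ∀ n : ℕ, 1 ≤ n → (∀ i ∈ t, a i ≤ n) → (#t : ℝ) ≤ M * n) :
    ∑ i ∈ s, (a i ^ (-δ)).toReal ≤ (2 * M) ^ δ * (#s : ℝ) ^ (1 - δ) / (1 - δ) := by
  classical
  induction s using Finset.induction_on_max_value a with
  | empty => simp [Real.zero_rpow (by linarith : 1 - δ ≠ 0)]
  | insert j s hj hmax ih =>
    have hterm : (a j ^ (-δ)).toReal ≤ (2 * M) ^ δ * ((#s + 1 : ℕ) : ℝ) ^ (-δ) := by
      refine toReal_rpow_neg_le_of_forall_le_natCast hM hδ0 (ha j (mem_insert_self j s))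
        (Nat.succ_pos _) fun n hn hjn => ?_
      rw [← card_insert_of_notMem hj]
      exact hcount _ subset_rfl n hn fun i hi =>
        (mem_insert.mp hi).elim (· ▸ hjn) fun his => (hmax i his).trans hjn
    have hstep := one_sub_mul_rpow_neg_le_rpow_sub_rpow hδ0.le hδ1.le
      (by simp : (1 : ℝ) ≤ ((#s + 1 : ℕ) : ℝ))
    have hs := ih (fun i hi => ha i (mem_insert_of_mem hi))
      fun t ht => hcount t (ht.trans (subset_insert j s))
    have h1δ : 0 < 1 - δ := by linarith
    set N : ℝ := (s.card : ℝ)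
    push_cast at hterm hstep
    rw [add_sub_cancel_right] at hstep
    calc ∑ i ∈ insert j s, (a i ^ (-δ)).toReal
        = (a j ^ (-δ)).toReal + ∑ i ∈ s, (a i ^ (-δ)).toReal := sum_insert hj
      _ ≤ (2 * M) ^ δ * ((N + 1) ^ (1 - δ) - N ^ (1 - δ)) / (1 - δ)
          + (2 * M) ^ δ * N ^ (1 - δ) / (1 - δ) := by
        gcongr
        refine hterm.trans ?_
        rw [mul_div_assoc]
        gcongr
        rw [le_div_iff₀ h1δ]
        linarith
      _ = (2 * M) ^ δ * ((#(insert j s) : ℕ) : ℝ) ^ (1 - δ) / (1 - δ) := by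
        rw [card_insert_of_notMem hj]
        push_cast
        ring

lemma sum_sum_add_add_le_three_mul {ι : Type*} (s : Finset ι) (B : ι → ι → ℝ) (C : ι → ℝ)
    {A : ℝ} (hB : ∀ k ∈ s, ∑ k' ∈ s, B k k' ≤ A) (hC : ∑ k ∈ s, C k ≤ A) :
    ∑ k ∈ s, ∑ k' ∈ s, (B k k' + C k + C k') ≤ 3 * #s * A := by
  have hB' : ∑ k ∈ s, ∑ k' ∈ s, B k k' ≤ #s * A := by
    simpa using sum_le_card_nsmul s _ A hB
  have hs : (0 : ℝ) ≤ #s := by positivity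
  simp only [sum_add_distrib, sum_const, nsmul_eq_mul, ← mul_sum]
  nlinarith

lemma integral_sq_sum_eq_sum_sum_integral_mul {Y ι : Type*} [MeasurableSpace Y]
    {ν : Measure Y} (s : Finset ι) {F : ι → Y → ℝ} (hF : ∀ k ∈ s, MemLp (F k) 2 ν) :
    ∫ y, (∑ k ∈ s, F k y) ^ 2 ∂ν = ∑ k ∈ s, ∑ k' ∈ s, ∫ y, F k y * F k' y ∂ν := by
  have hint : ∀ k ∈ s, ∀ k' ∈ s, Integrable (fun y => F k y * F k' y) ν := fun k hk k' hk' =>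
    (hF k hk).integrable_mul (hF k' hk')
  simp_rw [sq, sum_mul_sum]
  rw [integral_finsetSum s fun k hk => integrable_finsetSum s (hint k hk)]
  exact sum_congr rfl fun k hk => integral_finsetSum s (hint k hk)

lemma mul_sq_mul_three_mul_le {M δ L N : ℝ} (hM : 0 < M) (hδ1 : δ < 1) (hN : 0 ≤ N) :
    M * (L ^ 2 * (3 * N * ((2 * M) ^ δ * N ^ (1 - δ) / (1 - δ)))) ≤
      2 ^ (3 + δ) * M ^ (1 + δ) * (1 - δ)⁻¹ * L ^ 2 * N ^ (2 - δ) := by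
  rw [Real.rpow_add two_pos, Real.rpow_add hM, Real.mul_rpow two_pos.le hM.le,
    show 2 - δ = 1 + (1 - δ) by ring, Real.rpow_add' hN (by linarith), Real.rpow_one,
    Real.rpow_one]
  have hP : 0 ≤ M * L ^ 2 * N * (2 ^ δ * M ^ δ * N ^ (1 - δ) / (1 - δ)) := by positivity
  norm_num
  linear_combination 5 * hP

theorem second_moment_bound_delta_lt_one_general
    {Y : Type*} [MeasurableSpace Y]
    (ν : Measure Y)
    (ℓ : ℕ)
    (F : ℕ → Y → ℝ)
    (hFL2 : ∀ n : ℕ, 1 ≤ n → MemLp (F n) 2 ν)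
    (M δ : ℝ) (hM : 1 ≤ M) (hδ0 : 0 < δ) (hδ1 : δ < 1)
    (b : Fin ℓ → Fin ℓ → ℕ → ℕ → ℝ≥0∞) (hb1 : ∀ i j m n, 1 ≤ b i j m n)
    (c : Fin ℓ → Fin ℓ → ℕ → ℝ≥0∞) (hc1 : ∀ i j n, 1 ≤ c i j n)
    (hcorr : ∀ m n : ℕ, 1 ≤ m → 1 ≤ n →
      |∫ y, F m y * F n y ∂ν| ≤
        M * ∑ i, ∑ j, ((b i j m n ^ (-δ)).toReal + (c i j m ^ (-δ)).toReal +
          (c i j n ^ (-δ)).toReal))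
    (hccard : ∀ i j, ∀ n : ℕ, 1 ≤ n → ∀ s : Finset ℕ,
      (∀ k ∈ s, 1 ≤ k ∧ c i j k ≤ (n : ℝ≥0∞)) → (s.card : ℝ) ≤ M * n)
    (hbcard : ∀ i j, ∀ m n : ℕ, 1 ≤ m → 1 ≤ n → ∀ s : Finset ℕ,
      (∀ k ∈ s, 1 ≤ k ∧ b i j m k ≤ (n : ℝ≥0∞)) → (s.card : ℝ) ≤ M * n) :
    ∀ m n : ℕ, m < n →
      ∫ y, (∑ k ∈ Finset.Ioc m n, F k y) ^ 2 ∂ν ≤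
        (2 : ℝ) ^ (3 + δ) * M ^ (1 + δ) * (1 - δ)⁻¹ * (ℓ : ℝ) ^ 2 *
          ((n : ℝ) - (m : ℝ)) ^ (2 - δ) := by
  intro m n hmn
  set I := Ioc m n
  have hI : ∀ k ∈ I, 1 ≤ k := fun k hk => by have := (mem_Ioc.mp hk).1; omega
  have hM0 : 0 < M := by linarith
  set A := (2 * M) ^ δ * (#I : ℝ) ^ (1 - δ) / (1 - δ)
  have hpair : ∀ i j, ∑ k ∈ I, ∑ k' ∈ I, ((b i j k k' ^ (-δ)).toReal + (c i j k ^ (-δ)).toReal +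
      (c i j k' ^ (-δ)).toReal) ≤ 3 * #I * A := fun i j =>
    sum_sum_add_add_le_three_mul I _ _
      (fun k hk => sum_toReal_rpow_neg_le hM0 hδ0 hδ1 (fun k' _ => hb1 i j k k')
        fun t ht n hn htn => hbcard i j k n (hI k hk) hn t fun k' hk' =>
          ⟨hI k' (ht hk'), htn k' hk'⟩)
      (sum_toReal_rpow_neg_le hM0 hδ0 hδ1 (fun k _ => hc1 i j k)
        fun t ht n hn htn => hccard i j n hn t fun k hk => ⟨hI k (ht hk), htn k hk⟩)
  have hcardI : (#I : ℝ) = n - m := by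
    rw [Nat.card_Ioc, Nat.cast_sub hmn.le]
  calc ∫ y, (∑ k ∈ I, F k y) ^ 2 ∂ν = ∑ k ∈ I, ∑ k' ∈ I, ∫ y, F k y * F k' y ∂ν :=
        integral_sq_sum_eq_sum_sum_integral_mul I fun k hk => hFL2 k (hI k hk)
    _ ≤ ∑ k ∈ I, ∑ k' ∈ I, M * ∑ i, ∑ j, ((b i j k k' ^ (-δ)).toReal +
          (c i j k ^ (-δ)).toReal + (c i j k' ^ (-δ)).toReal) :=
        sum_le_sum fun k hk => sum_le_sum fun k' hk' =>
          (le_abs_self _).trans (hcorr k k' (hI k hk) (hI k' hk'))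
    _ = M * ∑ i, ∑ j, ∑ k ∈ I, ∑ k' ∈ I, ((b i j k k' ^ (-δ)).toReal +
          (c i j k ^ (-δ)).toReal + (c i j k' ^ (-δ)).toReal) := by
        simp only [← mul_sum, sum_comm (s := I) (t := (univ : Finset (Fin ℓ)))]
    _ ≤ M * ((ℓ : ℝ) ^ 2 * (3 * #I * A)) := by
        gcongr
        simpa [sq, mul_assoc] using
          sum_le_card_nsmul univ _ _ fun i _ => sum_le_card_nsmul univ _ _ fun j _ => hpair i j
    _ ≤ _ := by
        rw [← hcardI]
        exact mul_sq_mul_three_mul_le hM0 hδ1 (by positivity)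

theorem second_moment_bound_delta_lt_one
    {X Y : Type*} [MeasurableSpace X] [MeasurableSpace Y]
    (ν : Measure Y) [IsProbabilityMeasure ν]
    (ℓ : ℕ) (hℓ : 1 ≤ ℓ)
    (ξ : Fin ℓ → Y → X) (hξ : ∀ i, Measurable (ξ i))
    (h : Fin ℓ → ℕ → X → X) (hh : ∀ i n, Measurable (h i n))
    (f : Fin ℓ → X → ℝ) (hf : ∀ i, Measurable (f i))
    (F : ℕ → Y → ℝ) (hF : ∀ n y, F n y = ∏ i, f i (h i n (ξ i y)))
    (hFL2 : ∀ n : ℕ, 1 ≤ n → MemLp (F n) 2 ν)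
    (M δ : ℝ) (hM : 1 ≤ M) (hδ0 : 0 < δ) (hδ1 : δ < 1)
    (b : Fin ℓ → Fin ℓ → ℕ → ℕ → ℝ≥0∞) (hb1 : ∀ i j m n, 1 ≤ b i j m n)
    (c : Fin ℓ → Fin ℓ → ℕ → ℝ≥0∞) (hc1 : ∀ i j n, 1 ≤ c i j n)
    (hcorr : ∀ m n : ℕ, 1 ≤ m → 1 ≤ n →
      |∫ y, F m y * F n y ∂ν| ≤
        M * ∑ i, ∑ j, ((b i j m n ^ (-δ)).toReal + (c i j m ^ (-δ)).toReal +
          (c i j n ^ (-δ)).toReal))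
    (hccard : ∀ i j, ∀ n : ℕ, 1 ≤ n → ∀ s : Finset ℕ,
      (∀ k ∈ s, 1 ≤ k ∧ c i j k ≤ (n : ℝ≥0∞)) → (s.card : ℝ) ≤ M * n)
    (hbcard : ∀ i j, ∀ m n : ℕ, 1 ≤ m → 1 ≤ n → ∀ s : Finset ℕ,
      (∀ k ∈ s, 1 ≤ k ∧ b i j m k ≤ (n : ℝ≥0∞)) → (s.card : ℝ) ≤ M * n) :
    ∀ m n : ℕ, m < n →
      ∫ y, (∑ k ∈ Finset.Ioc m n, F k y) ^ 2 ∂ν ≤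
        (2 : ℝ) ^ (3 + δ) * M ^ (1 + δ) * (1 - δ)⁻¹ * (ℓ : ℝ) ^ 2 *
          ((n : ℝ) - (m : ℝ)) ^ (2 - δ) :=
  second_moment_bound_delta_lt_one_general ν ℓ F hFL2 M δ hM hδ0 hδ1 b hb1 c hc1 hcorr hccard hbcard
end
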